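/- Let p be a prime, m, n ≥ 1. The number of pairs of weakly increasing tuples 0 < a₁ ≤ ⋯ ≤ a_m < p and 0 < b₁ ≤ ⋯ ≤ b_n < p such that a_i + b_j is not divisible by p for all i, j, equals ∑_{l=1}^{min(n, p-2)} C(p-1, l) · C(n-1, n-l) · C(m + p - l - 2, m). -/

import Mathlib

/-!
Replace each weakly increasing tuple by the multiset of its entries, and read `p ∣ a + b` as
`a + b = 0` in `Fin p`. For a fixed multiset `t` of `b`'s whose support `B` has `l` elements and
avoids `0`, the admissible multisets of `a`'s are exactly the size-`m` multisets on
`(Fin p \ {0}) \ -B`, a set of `p - 1 - l` elements, so there are `C(m + p - l - 2, m)` of them.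
A size-`n` multiset with support exactly `B` is `B` plus an arbitrary size-`(n - l)` multiset
on `B`, so there are `C(n - 1, n - l)` such `t`; and there are `C(p - 1, l)` choices of `B`.
-/

open Finset
open scoped Classical

namespace Sym

variable {α : Type*} {n : ℕ}

def ofFn (f : Fin n → α) : Sym α n := ⟨List.ofFn f, by simp⟩

theorem mem_ofFn {f : Fin n → α} {x : α} : x ∈ ofFn f ↔ ∃ i, f i = x :=
  List.mem_ofFn

theorem injOn_ofFn_monotone [LinearOrder α] : Set.InjOn ofFn {f : Fin n → α | Monotone f} := by
  intro f hf g hg hfg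
  refine List.ofFn_injective (List.Perm.eq_of_sortedLE hf.sortedLE_ofFn hg.sortedLE_ofFn ?_)
  exact Multiset.coe_eq_coe.mp (congrArg Subtype.val hfg)

theorem exists_monotone_ofFn_eq [LinearOrder α] (s : Sym α n) :
    ∃ f : Fin n → α, Monotone f ∧ ofFn f = s := by
  set l := (s : Multiset α).sort (· ≤ ·)
  have hl : l.length = n := by simp [l]
  refine ⟨fun i => l.get (Fin.cast hl.symm i), ?_, ?_⟩
  · exact fun i j hij => (Multiset.pairwise_sort _ _).rel_get_of_le hij
  · apply Subtype.ext
    change ((List.ofFn fun i => l.get (Fin.cast hl.symm i) : List α) : Multiset α) = s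
    have : (List.ofFn fun i => l.get (Fin.cast hl.symm i)) = l :=
      List.ext_get (by simp [hl]) fun i _ _ => by simp
    rw [this, Multiset.sort_eq]

theorem card_filter_monotone_prod {β : Type*} [LinearOrder α] [LinearOrder β] [Fintype α]
    [Fintype β] {m : ℕ} (P : Sym α n → Sym β m → Prop) :
    #{fg : (Fin n → α) × (Fin m → β) |
        Monotone fg.1 ∧ Monotone fg.2 ∧ P (ofFn fg.1) (ofFn fg.2)} =
      #{st : Sym α n × Sym β m | P st.1 st.2} := by
  refine card_nbij (Prod.map ofFn ofFn) ?_ ?_ ?_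
  · intro fg hfg
    simp only [coe_filter, mem_univ, true_and, Set.mem_ofPred_eq] at hfg ⊢
    exact hfg.2.2
  · intro fg hfg fg' hfg' h
    simp only [coe_filter, mem_univ, true_and, Set.mem_ofPred_eq] at hfg hfg'
    obtain ⟨h1, h2⟩ := Prod.ext_iff.mp h
    exact Prod.ext (injOn_ofFn_monotone hfg.1 hfg'.1 h1) (injOn_ofFn_monotone hfg.2.1 hfg'.2.1 h2)
  · rintro ⟨s, t⟩ hst
    simp only [coe_filter, mem_univ, true_and, Set.mem_ofPred_eq] at hst
    obtain ⟨f, hf, rfl⟩ := exists_monotone_ofFn_eq s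
    obtain ⟨g, hg, rfl⟩ := exists_monotone_ofFn_eq t
    exact ⟨(f, g), by simpa using ⟨hf, hg, hst⟩, rfl⟩

end Sym

theorem Finset.card_sym {α : Type*} [DecidableEq α] (s : Finset α) (k : ℕ) :
    #(s.sym k) = (#s).multichoose k := by
  conv_lhs => rw [← s.attach_map_val]
  rw [sym_map, card_map, attach_eq_univ, sym_univ, card_univ, Sym.card_sym_eq_multichoose,
    Fintype.card_coe]

namespace Sym

variable {α : Type*} [DecidableEq α] [Fintype α] {n : ℕ}

theorem card_filter_toFinset_eq_of_card_le (B : Finset α) (hB : #B ≤ n) :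
    #{t : Sym α n | (t : Multiset α).toFinset = B} = (#B).multichoose (n - #B) := by
  have val_le {t : Sym α n} (ht : (t : Multiset α).toFinset = B) : B.val ≤ t := by
    rw [val_le_iff_val_subset]
    intro x hx
    rw [← Multiset.mem_toFinset, ht]
    exact hx
  rw [← card_sym]
  symm
  refine card_bij' (fun u _ => Sym.mk ((u : Multiset α) + B.val) (by simp; omega))
    (fun t ht => Sym.mk ((t : Multiset α) - B.val) (by
      rw [Multiset.card_sub (val_le (mem_filter.mp ht).2)]; simp)) ?_ ?_ ?_ ?_
  · intro u hu
    rw [mem_sym_iff] at hu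
    simp only [mem_filter, mem_univ, true_and, Sym.coe_mk, Multiset.toFinset_add, val_toFinset]
    exact union_eq_right.mpr fun x hx => hu x (Multiset.mem_toFinset.mp hx)
  · intro t ht
    rw [mem_sym_iff]
    intro x hx
    rw [← (mem_filter.mp ht).2, Multiset.mem_toFinset]
    exact Multiset.mem_of_le (Multiset.sub_le_self _ _) hx
  · intro u _
    exact Sym.coe_injective Multiset.add_sub_cancel_right
  · intro t ht
    exact Sym.coe_injective (tsub_add_cancel_of_le (val_le (mem_filter.mp ht).2))

theorem card_filter_toFinset_eq (B : Finset α) :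
    #{t : Sym α n | (t : Multiset α).toFinset = B}
      = if #B ≤ n then (#B).multichoose (n - #B) else 0 := by
  split_ifs with hB
  · exact card_filter_toFinset_eq_of_card_le B hB
  · rw [card_eq_zero, filter_eq_empty_iff]
    rintro t - rfl
    exact hB ((Multiset.toFinset_card_le _).trans_eq t.2)

end Sym

section ZeroSumFree

open scoped Pointwise

variable {G : Type*} [AddGroup G] [Fintype G] [DecidableEq G]

theorem mem_erase_zero_sdiff_neg {B : Finset G} {x : G} :
    x ∈ ((univ : Finset G).erase 0) \ -B ↔ x ≠ 0 ∧ ∀ y ∈ B, x + y ≠ 0 := by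
  simp only [mem_sdiff, mem_erase, mem_univ, and_true, mem_neg', ne_eq, add_eq_zero_iff_neg_eq,
    forall_mem_not_eq]

theorem card_erase_zero_sdiff_neg {B : Finset G} (hB : 0 ∉ B) :
    #(((univ : Finset G).erase 0) \ -B) = Fintype.card G - 1 - #B := by
  have : -B ⊆ (univ : Finset G).erase 0 := fun x hx => by
    rw [mem_erase]
    refine ⟨?_, mem_univ x⟩
    rintro rfl
    exact hB (by simpa using hx)
  rw [card_sdiff_of_subset this, card_neg, card_erase_of_mem (mem_univ _), card_univ]

def ZeroSumFree {m n : ℕ} (s : Sym G m) (t : Sym G n) : Prop :=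
  (∀ x ∈ s, x ≠ 0) ∧ (∀ y ∈ t, y ≠ 0) ∧ ∀ x ∈ s, ∀ y ∈ t, x + y ≠ 0

theorem card_filter_zeroSumFree_left {m n : ℕ} (t : Sym G n) :
    #{s : Sym G m | ZeroSumFree s t} = if 0 ∈ (t : Multiset G).toFinset then 0
      else (Fintype.card G - 1 - #(t : Multiset G).toFinset).multichoose m := by
  split_ifs with h0
  · rw [card_eq_zero, filter_eq_empty_iff]
    exact fun s _ h => h.2.1 0 (Multiset.mem_toFinset.mp h0) rfl
  have ht : ∀ y ∈ t, y ≠ 0 := fun y hy hy0 => h0 (by simpa [hy0] using hy)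
  have : (univ.filter fun s : Sym G m => ZeroSumFree s t) =
      (((univ : Finset G).erase 0) \ -(t : Multiset G).toFinset).sym m := by
    ext s
    simp only [ZeroSumFree, mem_sym_iff, mem_erase_zero_sdiff_neg,
      Multiset.mem_toFinset, Sym.mem_coe]
    grind
  rw [this, card_sym, card_erase_zero_sdiff_neg h0]

theorem card_zeroSumFree (m n : ℕ) :
    #{st : Sym G m × Sym G n | ZeroSumFree st.1 st.2} =
      ∑ l ∈ range (Fintype.card G), (Fintype.card G - 1).choose l *
        (if l ≤ n then l.multichoose (n - l) else 0) * (Fintype.card G - 1 - l).multichoose m := by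
  set F : Finset G → ℕ := fun B => if 0 ∈ B then 0 else (Fintype.card G - 1 - #B).multichoose m
  have supp : (univ.filter fun B : Finset G => 0 ∉ B) = ((univ : Finset G).erase 0).powerset := by
    ext B
    simp [subset_erase]
  calc _ = ∑ t : Sym G n, F (t : Multiset G).toFinset := by
        simp only [card_filter, Fintype.sum_prod_type_right, ← card_filter_zeroSumFree_left, F]
    _ = ∑ B : Finset G, #{t : Sym G n | (t : Multiset G).toFinset = B} * F B := by
        rw [← sum_fiberwise' univ _ F]
        simp only [sum_const, smul_eq_mul]
    _ = ∑ B ∈ ((univ : Finset G).erase 0).powerset,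
          (if #B ≤ n then (#B).multichoose (n - #B) else 0) *
            (Fintype.card G - 1 - #B).multichoose m := by
        rw [← supp, sum_filter]
        refine sum_congr rfl fun B _ => ?_
        rw [Sym.card_filter_toFinset_eq]
        split_ifs <;> simp_all [F]
    _ = _ := by
        rw [sum_powerset_apply_card (fun l => (if l ≤ n then l.multichoose (n - l) else 0) *
          (Fintype.card G - 1 - l).multichoose m), card_erase_of_mem (mem_univ _), card_univ,
          Nat.sub_add_cancel Fintype.card_pos]
        simp only [smul_eq_mul, mul_assoc]

end ZeroSumFree

theorem sum_range_choose_multichoose_eq {N m n : ℕ} (hm : 1 ≤ m) (hn : 1 ≤ n) :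
    ∑ l ∈ range N, (N - 1).choose l * (if l ≤ n then l.multichoose (n - l) else 0) *
        (N - 1 - l).multichoose m =
      ∑ l ∈ Icc 1 (min n (N - 2)),
        (N - 1).choose l * (n - 1).choose (n - l) * (m + N - l - 2).choose m := by
  refine (sum_subset (fun l hl => ?_) fun l hl hl' => ?_).symm.trans
    (sum_congr rfl fun l hl => ?_)
  · simp only [mem_Icc, mem_range] at hl ⊢
    omega
  · simp only [mem_Icc, mem_range, not_and_or, not_le] at hl hl'
    by_cases hln : l ≤ n
    · rw [if_pos hln, Nat.multichoose_eq, Nat.multichoose_eq]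
      -- the only terms left outside `Icc` are `l = 0` and `l = N - 1`
      have : (l + (n - l) - 1).choose (n - l) = 0 ∨ (N - 1 - l + m - 1).choose m = 0 := by
        by_cases hl0 : l = 0
        · exact .inl (Nat.choose_eq_zero_of_lt (by omega))
        · exact .inr (Nat.choose_eq_zero_of_lt (by omega))
      rcases this with h | h <;> simp [h]
    · rw [if_neg hln, mul_zero, zero_mul]
  · simp only [mem_Icc] at hl
    rw [if_pos (by omega), Nat.multichoose_eq, Nat.multichoose_eq,
      show l + (n - l) - 1 = n - 1 by omega, show N - 1 - l + m - 1 = m + N - l - 2 by omega]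

theorem Fin.add_eq_zero_iff_dvd {p : ℕ} [NeZero p] (a b : Fin p) :
    a + b = 0 ↔ p ∣ (a : ℕ) + b := by
  rw [Fin.ext_iff, Fin.val_add, Fin.val_zero, Nat.dvd_iff_mod_eq_zero]

theorem stmt_14_general (p m n : ℕ) (hm : 1 ≤ m) (hn : 1 ≤ n) :
    (Finset.univ.filter (fun ab : (Fin m → Fin p) × (Fin n → Fin p) =>
        (∀ i : Fin m, 0 < (ab.1 i : ℕ)) ∧
        (∀ j : Fin n, 0 < (ab.2 j : ℕ)) ∧
        (∀ i j : Fin m, i ≤ j → ab.1 i ≤ ab.1 j) ∧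
        (∀ i j : Fin n, i ≤ j → ab.2 i ≤ ab.2 j) ∧
        ∀ (i : Fin m) (j : Fin n), ¬ p ∣ ((ab.1 i : ℕ) + (ab.2 j : ℕ)))).card =
      ∑ l ∈ Finset.Icc 1 (min n (p - 2)),
        Nat.choose (p - 1) l * Nat.choose (n - 1) (n - l) *
          Nat.choose (m + p - l - 2) m := by
  rcases Nat.eq_zero_or_pos p with rfl | hp
  · have : Nonempty (Fin m) := ⟨⟨0, hm⟩⟩
    simp
  have : NeZero p := ⟨hp.ne'⟩
  have reformulate : ∀ ab : (Fin m → Fin p) × (Fin n → Fin p),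
      ((∀ i : Fin m, 0 < (ab.1 i : ℕ)) ∧ (∀ j : Fin n, 0 < (ab.2 j : ℕ)) ∧
        (∀ i j : Fin m, i ≤ j → ab.1 i ≤ ab.1 j) ∧ (∀ i j : Fin n, i ≤ j → ab.2 i ≤ ab.2 j) ∧
        ∀ (i : Fin m) (j : Fin n), ¬ p ∣ ((ab.1 i : ℕ) + (ab.2 j : ℕ))) ↔
      Monotone ab.1 ∧ Monotone ab.2 ∧ ZeroSumFree (Sym.ofFn ab.1) (Sym.ofFn ab.2) := by
    intro ab
    simp only [ZeroSumFree, Sym.mem_ofFn, forall_exists_index, forall_apply_eq_imp_iff, ne_eq,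
      Fin.add_eq_zero_iff_dvd, Nat.pos_iff_ne_zero, Fin.val_ne_zero_iff]
    exact ⟨fun ⟨ha, hb, hma, hmb, hd⟩ => ⟨hma, hmb, ha, hb, hd⟩,
      fun ⟨hma, hmb, ha, hb, hd⟩ => ⟨ha, hb, hma, hmb, hd⟩⟩
  rw [filter_congr fun ab _ => reformulate ab, Sym.card_filter_monotone_prod, card_zeroSumFree,
    Fintype.card_fin, sum_range_choose_multichoose_eq hm hn]

theorem stmt_14 (p m n : ℕ) (hp : p.Prime) (hm : 1 ≤ m) (hn : 1 ≤ n) :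
    (Finset.univ.filter (fun ab : (Fin m → Fin p) × (Fin n → Fin p) =>
        (∀ i : Fin m, 0 < (ab.1 i : ℕ)) ∧
        (∀ j : Fin n, 0 < (ab.2 j : ℕ)) ∧
        (∀ i j : Fin m, i ≤ j → ab.1 i ≤ ab.1 j) ∧
        (∀ i j : Fin n, i ≤ j → ab.2 i ≤ ab.2 j) ∧
        ∀ (i : Fin m) (j : Fin n), ¬ p ∣ ((ab.1 i : ℕ) + (ab.2 j : ℕ)))).card =
      ∑ l ∈ Finset.Icc 1 (min n (p - 2)),
        Nat.choose (p - 1) l * Nat.choose (n - 1) (n - l) *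
          Nat.choose (m + p - l - 2) m :=
  stmt_14_general p m n hm hn
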